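/- Let u, v be jointly Gaussian standard normal random variables with correlation ρ = Cov(u,v), and let s be a random variable independent of (u,v). Then E[Sign(s+u)·v] = ρ·E[Sign(s+u)·u]. -/

import Mathlib

open MeasureTheory ProbabilityTheory

/-!
Write `v = ρ u + √(1 - ρ²) w`. The factor `Sign (s + u)` is a function of `(u, s)`, hence
independent of `w`, so `E[Sign (s + u) · w] = E[Sign (s + u)] · E[w] = 0`, and only the `ρ u`
part of `v` contributes.
-/

/-- The sign function: `Sign x = x / |x|` for `x ≠ 0`, `Sign 0 = 0`. -/
noncomputable def signFun (x : ℝ) : ℝ := if x = 0 then 0 else x / |x|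

lemma measurable_signFun : Measurable signFun :=
  Measurable.ite (measurableSet_eq_fun measurable_id measurable_const)
    measurable_const (measurable_id.div measurable_id.abs)

lemma abs_signFun_le (x : ℝ) : |signFun x| ≤ 1 := by
  unfold signFun
  rcases eq_or_ne x 0 with hx | hx
  · simp [hx]
  · rw [if_neg hx, abs_div, abs_abs, div_self (abs_ne_zero.2 hx)]

section GaussianLaw

variable {Ω : Type*} [MeasurableSpace Ω] {μ : Measure Ω} {X : Ω → ℝ} {m : ℝ} {σ2 : NNReal}

lemma integrable_of_map_eq_gaussianReal (hX : AEMeasurable X μ)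
    (hlaw : μ.map X = gaussianReal m σ2) : Integrable X μ := by
  have hid : Integrable id (μ.map X) := hlaw ▸ (memLp_id_gaussianReal 1).integrable le_rfl
  exact (integrable_map_measure aestronglyMeasurable_id hX).mp hid

lemma integral_eq_of_map_eq_gaussianReal (hX : AEMeasurable X μ)
    (hlaw : μ.map X = gaussianReal m σ2) : ∫ ω, X ω ∂μ = m := by
  calc ∫ ω, X ω ∂μ = ∫ x, x ∂(μ.map X) := (integral_map hX aestronglyMeasurable_id).symm
    _ = m := by rw [hlaw, integral_id_gaussianReal]

end GaussianLaw

lemma ProbabilityTheory.iIndepFun.indepFun_prodMk_fin_three {Ω β : Type*} [MeasurableSpace Ω]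
    [MeasurableSpace β] {μ : Measure Ω} {X Y Z : Ω → β} (hind : iIndepFun ![X, Y, Z] μ)
    (hX : Measurable X) (hY : Measurable Y) (hZ : Measurable Z) :
    IndepFun (fun ω ↦ (X ω, Z ω)) Y μ := by
  have hmeas : ∀ i, Measurable (![X, Y, Z] i) := by
    intro i
    fin_cases i <;> assumption
  simpa using hind.indepFun_prodMk hmeas 0 2 1 (by decide) (by decide)

lemma integral_mul_eq_zero_of_indepFun {Ω : Type*} [MeasurableSpace Ω] {μ : Measure Ω}
    {f g : Ω → ℝ} (hfg : IndepFun f g μ) (hf : AEStronglyMeasurable f μ)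
    (hg : AEStronglyMeasurable g μ) (hg0 : ∫ ω, g ω ∂μ = 0) :
    ∫ ω, f ω * g ω ∂μ = 0 := by
  simpa [hg0] using hfg.integral_fun_mul_eq_mul_integral hf hg

theorem sign_jointly_gaussian_correlation_general
    {Ω : Type*} [MeasurableSpace Ω] (μ : Measure Ω)
    (u w s : Ω → ℝ) (ρ : ℝ)
    (hum : Measurable u) (hwm : Measurable w) (hsm : Measurable s)
    (hu : μ.map u = gaussianReal 0 1) (hw : μ.map w = gaussianReal 0 1)
    (hind : iIndepFun ![u, w, s] μ)
    (v : Ω → ℝ) (hv : ∀ ω, v ω = ρ * u ω + Real.sqrt (1 - ρ ^ 2) * w ω) :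
    ∫ ω, signFun (s ω + u ω) * v ω ∂μ = ρ * ∫ ω, signFun (s ω + u ω) * u ω ∂μ := by
  set h : Ω → ℝ := fun ω ↦ signFun (s ω + u ω)
  have hh_meas : Measurable h := measurable_signFun.comp (hsm.add hum)
  have hh_bdd : ∀ᵐ ω ∂μ, ‖h ω‖ ≤ 1 := ae_of_all _ fun ω ↦ abs_signFun_le _
  have hh_indep : IndepFun h w μ :=
    (hind.indepFun_prodMk_fin_three hum hwm hsm).comp
      (measurable_signFun.comp (measurable_snd.add measurable_fst)) measurable_id
  have hhw : ∫ ω, h ω * w ω ∂μ = 0 :=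
    integral_mul_eq_zero_of_indepFun hh_indep hh_meas.aestronglyMeasurable
      hwm.aestronglyMeasurable (integral_eq_of_map_eq_gaussianReal hwm.aemeasurable hw)
  have hhu_int : Integrable (fun ω ↦ h ω * u ω) μ :=
    (integrable_of_map_eq_gaussianReal hum.aemeasurable hu).bdd_mul
      hh_meas.aestronglyMeasurable hh_bdd
  have hhw_int : Integrable (fun ω ↦ h ω * w ω) μ :=
    (integrable_of_map_eq_gaussianReal hwm.aemeasurable hw).bdd_mul
      hh_meas.aestronglyMeasurable hh_bdd
  calc ∫ ω, h ω * v ω ∂μ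
      = ∫ ω, ρ * (h ω * u ω) + Real.sqrt (1 - ρ ^ 2) * (h ω * w ω) ∂μ := by
        congr 1 with ω
        rw [hv]
        ring
    _ = ρ * ∫ ω, h ω * u ω ∂μ := by
        rw [integral_add (hhu_int.const_mul ρ) (hhw_int.const_mul _), integral_const_mul,
          integral_const_mul, hhw, mul_zero, add_zero]

/-- Let `u, v` be jointly Gaussian standard normal random variables with correlation
`ρ = Cov(u,v)` (encoded via the decomposition `v = ρ u + √(1-ρ²) w` with `w` a standard
Gaussian independent of `u`), and let `s` be independent of `(u,v)`.  Then
`E[Sign(s+u)·v] = ρ · E[Sign(s+u)·u]`. -/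
theorem sign_jointly_gaussian_correlation
    {Ω : Type*} [MeasurableSpace Ω] (μ : Measure Ω) [IsProbabilityMeasure μ]
    (u w s : Ω → ℝ) (ρ : ℝ) (hρ : |ρ| ≤ 1)
    (hum : Measurable u) (hwm : Measurable w) (hsm : Measurable s)
    (hu : μ.map u = gaussianReal 0 1) (hw : μ.map w = gaussianReal 0 1)
    (hind : iIndepFun ![u, w, s] μ)
    (v : Ω → ℝ) (hv : ∀ ω, v ω = ρ * u ω + Real.sqrt (1 - ρ ^ 2) * w ω) :
    ∫ ω, signFun (s ω + u ω) * v ω ∂μ = ρ * ∫ ω, signFun (s ω + u ω) * u ω ∂μ :=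
  sign_jointly_gaussian_correlation_general μ u w s ρ hum hwm hsm hu hw hind v hv
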